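/- In the R_right Lag system with n ≥ 5, starting from the string (s₁,blank)...(s_{n-3},blank)(s_{n-2},d)(s_{n-1},t)(sₙ,blank), after n(n−1) additional iterations the memory string is (s₁,blank)...(s_{n-4},blank)(s_{n-3},d)(s_{n-2},blank)(s_{n-1},t)(sₙ,blank); i.e., one full cycle shifts the pulsed-hold token d exactly one position counterclockwise while t stays fixed. -/

import Mathlib

namespace Stmt8

/-- Control symbols for the clockwise-rotation construction. -/
inductive Ctl | blank | p | t | w | R | d | g | z | v | r
deriving DecidableEq

/-- The rule set `R_right` on control coordinates: `R_t` together with the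
rules for the pulsed-hold token `d`, the interaction tokens `g`, `z`,
the victory pulse `v`, and the begin/end tokens `R`, `r`. -/
def rc : Ctl → Ctl → Option Ctl
  | .blank, .blank => some .blank
  | .blank, .p => some .p
  | .p, .blank => some .blank
  | .blank, .t => some .p
  | .blank, .w => some .blank
  | .t, .blank => some .w
  | .w, .blank => some .w
  | .w, .p => some .t
  | .p, .w => some .blank
  | .blank, .R => some .d
  | .blank, .d => some .blank
  | .blank, .g => some .z
  | .blank, .z => some .p
  | .blank, .v => some .v
  | .blank, .r => some .blank
  | .R, .blank => some .t
  | .w, .d => some .v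
  | .w, .z => some .w
  | .p, .d => some .blank
  | .d, .blank => some .d
  | .d, .t => some .g
  | .d, .p => some .g
  | .d, .v => some .r
  | .g, .blank => some .blank
  | .g, .w => some .blank
  | .z, .blank => some .d
  | .v, .blank => some .blank
  | .v, .d => some .blank
  | _, _ => none

/-- One Lag iteration with context length 2: match the control symbols of the
first two pairs, delete the first pair, append a pair with the first pair's
data symbol and the rule's output control symbol. -/
def step {α : Type*} (r : Ctl → Ctl → Option Ctl) :
    List (α × Ctl) → Option (List (α × Ctl))
  | (x, a) :: (y, b) :: rest => (r a b).map fun c => (y, b) :: rest ++ [(x, c)]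
  | _ => none

/-- `k` iterations of the Lag system. -/
def iterL {α : Type*} (r : Ctl → Ctl → Option Ctl) :
    ℕ → List (α × Ctl) → Option (List (α × Ctl))
  | 0, s => some s
  | k + 1, s => (step r s).bind (iterL r k)

end Stmt8

/-!
Each step moves the front cell to the back, so `n` consecutive steps on a word of length `n` form
one pass over the cyclic word: every cell is rewritten once, by the rule applied to it and its right
neighbour, and the data symbols return to their places. The `n(n - 1)` steps are therefore `n - 1`
passes acting on the control word alone, and these are computed explicitly: `d t` becomes `g w`,
then `z blank w`, which leaves `d` one cell further left and emits a pulse `p`; the pulse travels left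
one cell per pass, wraps around to the last cell, and on the last pass turns `w` back into `t`.
-/

theorem List.ofFn_prod_eq_zip {α β : Type*} {n : ℕ} (s : Fin n → α) (c : Fin n → β) :
    (List.ofFn fun i => (s i, c i)) = (List.ofFn s).zip (List.ofFn c) := by
  refine List.ext_getElem (by simp) fun i h _ => ?_
  simp

namespace Stmt8

section General

variable {α : Type*} (r : Ctl → Ctl → Option Ctl)

theorem iterL_add (a b : ℕ) (s : List (α × Ctl)) :
    iterL r (a + b) s = (iterL r a s).bind (iterL r b) := by
  induction a generalizing s with
  | zero => simp [iterL]
  | succ a ih =>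
    rw [Nat.add_right_comm, iterL, iterL]
    cases step r s <;> simp [ih]

def sweep (e : Ctl) : List Ctl → Option (List Ctl)
  | [] => some []
  | a :: l => (r a (l.headD e)).bind fun c => (sweep e l).map (c :: ·)

/-- The last cell is rewritten after the first one, so its right neighbour is by then the new
first cell `c`. -/
def pass : List Ctl → Option (List Ctl)
  | a :: b :: l => (r a b).bind fun c => sweep r c (a :: b :: l)
  | _ => none

def passes : ℕ → List Ctl → Option (List Ctl)
  | 0, cs => some cs
  | k + 1, cs => (pass r cs).bind (passes k)

variable {r}

theorem length_of_sweep_eq_some {e : Ctl} :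
    ∀ {cs os : List Ctl}, sweep r e cs = some os → os.length = cs.length
  | [], os, h => by simp_all [sweep]
  | a :: l, os, h => by
    simp only [sweep, Option.bind_eq_some_iff, Option.map_eq_some_iff] at h
    obtain ⟨c, -, os', h', rfl⟩ := h
    simp [length_of_sweep_eq_some h']

theorem sweep_cons {e a c : Ctl} {l : List Ctl} (h : r a (l.headD e) = some c) :
    sweep r e (a :: l) = (sweep r e l).map (c :: ·) := by
  rw [sweep, h, Option.bind_some]

theorem iterL_zip_append_of_sweep_eq_some {e : Ctl} {y : α} :
    ∀ {cs os : List Ctl} {xs : List α} {rest : List (α × Ctl)},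
      sweep r e cs = some os → xs.length = cs.length →
      iterL r cs.length (xs.zip cs ++ (y, e) :: rest) = some ((y, e) :: rest ++ xs.zip os)
  | [], os, xs, rest, h, hl => by simp_all [sweep, iterL]
  | a :: l, os, xs, rest, h, hl => by
    simp only [sweep, Option.bind_eq_some_iff, Option.map_eq_some_iff] at h
    obtain ⟨c, hc, os', hl', rfl⟩ := h
    obtain ⟨x, xs, rfl⟩ := List.exists_cons_of_length_eq_add_one hl
    have hstep : step r ((x, a) :: (xs.zip l ++ (y, e) :: rest)) =
        some (xs.zip l ++ (y, e) :: rest ++ [(x, c)]) := by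
      rcases l with _ | ⟨a', l⟩ <;> rcases xs with _ | ⟨x', xs⟩ <;> simp_all [step]
    rw [List.length_cons, iterL, List.zip_cons_cons, List.cons_append, hstep, Option.bind_some,
      List.append_assoc, List.cons_append,
      iterL_zip_append_of_sweep_eq_some hl' (by simpa using hl)]
    simp

theorem iterL_length_zip_of_pass_eq_some {cs cs' : List Ctl} {xs : List α}
    (h : pass r cs = some cs') (hl : xs.length = cs.length) :
    iterL r cs.length (xs.zip cs) = some (xs.zip cs') := by
  obtain ⟨a, b, l, rfl⟩ : ∃ a b l, cs = a :: b :: l := by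
    rcases cs with _ | ⟨a, _ | ⟨b, l⟩⟩ <;> simp_all [pass]
  obtain ⟨c, hc, hs⟩ := Option.bind_eq_some_iff.mp h
  rw [sweep_cons hc] at hs
  obtain ⟨os, hos, rfl⟩ := Option.map_eq_some_iff.mp hs
  obtain ⟨x, xs, rfl⟩ := List.exists_cons_of_length_eq_add_one hl
  obtain ⟨x', xs, rfl⟩ := List.exists_cons_of_length_eq_add_one (by simpa using hl)
  calc iterL r (a :: b :: l).length ((x :: x' :: xs).zip (a :: b :: l))
      = iterL r (b :: l).length ((x' :: xs).zip (b :: l) ++ [(x, c)]) := by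
        simp [iterL, step, hc]
    _ = some ((x :: x' :: xs).zip (c :: os)) := by
        rw [iterL_zip_append_of_sweep_eq_some hos (by simpa using hl)]
        rfl

theorem length_of_pass_eq_some {cs cs' : List Ctl} (h : pass r cs = some cs') :
    cs'.length = cs.length := by
  rcases cs with _ | ⟨a, _ | ⟨b, l⟩⟩ <;> simp only [pass, reduceCtorEq] at h
  obtain ⟨c, -, hs⟩ := Option.bind_eq_some_iff.mp h
  exact length_of_sweep_eq_some hs

theorem iterL_mul_length_zip_of_passes_eq_some :
    ∀ {k : ℕ} {cs cs' : List Ctl} {xs : List α}, passes r k cs = some cs' →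
      xs.length = cs.length → iterL r (k * cs.length) (xs.zip cs) = some (xs.zip cs')
  | 0, cs, cs', xs, h, _ => by simp_all [passes, iterL]
  | k + 1, cs, cs', xs, h, hl => by
    obtain ⟨cs₁, h₁, h₂⟩ := Option.bind_eq_some_iff.mp h
    rw [Nat.succ_mul, Nat.add_comm, iterL_add, iterL_length_zip_of_pass_eq_some h₁ hl,
      Option.bind_some, ← length_of_pass_eq_some h₁]
    exact iterL_mul_length_zip_of_passes_eq_some h₂ (by rw [hl, length_of_pass_eq_some h₁])

end General

section RRight

open List

theorem sweep_rc_replicate_blank_append {e a : Ctl} (ha : rc .blank a = some .blank) (m : ℕ)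
    (l : List Ctl) :
    sweep rc e (replicate m Ctl.blank ++ a :: l) =
      (sweep rc e (a :: l)).map (replicate m Ctl.blank ++ ·) := by
  induction m with
  | zero => simp
  | succ m ih =>
    have hhead : rc .blank ((replicate m Ctl.blank ++ a :: l).headD e) = some .blank := by
      cases m with
      | zero => exact ha
      | succ m => rfl
    rw [replicate_succ, cons_append, sweep_cons hhead, ih, Option.map_map]
    rfl

theorem sweep_rc_p_replicate_blank_d (e : Ctl) (q : ℕ) (l : List Ctl) :
    sweep rc e (.p :: (replicate q Ctl.blank ++ .d :: l)) =
      (sweep rc e (.d :: l)).map (.blank :: replicate q Ctl.blank ++ ·) := by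
  have hhead : rc .p ((replicate q Ctl.blank ++ .d :: l).headD e) = some .blank := by
    cases q <;> rfl
  rw [sweep_cons hhead, sweep_rc_replicate_blank_append rfl, Option.map_map]
  rfl

theorem pass_rc_replicate_blank (m : ℕ) (l : List Ctl) :
    pass rc (replicate (m + 2) Ctl.blank ++ l) =
      sweep rc .blank (replicate (m + 2) Ctl.blank ++ l) :=
  rfl

theorem pass_rc_d_t (m : ℕ) :
    pass rc (replicate (m + 2) Ctl.blank ++ [.d, .t, .blank]) =
      some (replicate (m + 2) Ctl.blank ++ [.g, .w, .blank]) := by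
  rw [pass_rc_replicate_blank, sweep_rc_replicate_blank_append rfl]
  rfl

theorem pass_rc_g_w (m : ℕ) :
    pass rc (replicate (m + 2) Ctl.blank ++ [.g, .w, .blank]) =
      some (replicate (m + 1) Ctl.blank ++ [.z, .blank, .w, .blank]) := by
  rw [pass_rc_replicate_blank, replicate_succ', append_assoc, singleton_append,
    sweep_rc_replicate_blank_append rfl]
  rfl

/-- Once the pulse `p` reaches the front, the last cell, whose right neighbour it then is,
copies it. -/
def pulseWord (i q : ℕ) : List Ctl :=
  replicate i Ctl.blank ++
    .p :: (replicate q Ctl.blank ++ [.d, .blank, .w, if i = 0 then .p else .blank])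

theorem pass_rc_z_w (m : ℕ) :
    pass rc (replicate (m + 1) Ctl.blank ++ [.z, .blank, .w, .blank]) = some (pulseWord m 0) := by
  cases m with
  | zero => rfl
  | succ m =>
    rw [pass_rc_replicate_blank, replicate_succ', append_assoc, singleton_append,
      sweep_rc_replicate_blank_append rfl]
    rfl

theorem pass_rc_pulseWord_succ (i q : ℕ) :
    pass rc (pulseWord (i + 1) q) = some (pulseWord i (q + 1)) := by
  cases i with
  | zero =>
    simp only [pulseWord, zero_add, replicate_one, singleton_append, pass]
    rw [show rc .blank .p = some .p from rfl, Option.bind_some, sweep_cons rfl,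
      sweep_rc_p_replicate_blank_d]
    rfl
  | succ i =>
    rw [pulseWord, pass_rc_replicate_blank, replicate_succ', append_assoc, singleton_append,
      sweep_rc_replicate_blank_append rfl, sweep_cons rfl, sweep_rc_p_replicate_blank_d]
    rfl

theorem pass_rc_pulseWord_zero (q : ℕ) :
    pass rc (pulseWord 0 q) = some (replicate (q + 1) Ctl.blank ++ [.d, .blank, .t, .blank]) := by
  have hpass : pass rc (pulseWord 0 q) = sweep rc .blank (pulseWord 0 q) := by
    cases q <;> rfl
  rw [hpass, pulseWord, if_pos rfl, replicate_zero, nil_append, sweep_rc_p_replicate_blank_d]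
  rfl

theorem passes_rc_pulseWord (i q : ℕ) :
    passes rc (i + 1) (pulseWord i q) =
      some (replicate (q + i + 1) Ctl.blank ++ [.d, .blank, .t, .blank]) := by
  induction i generalizing q with
  | zero => rw [passes, pass_rc_pulseWord_zero]; rfl
  | succ i ih =>
    rw [passes, pass_rc_pulseWord_succ, Option.bind_some, ih, Nat.add_right_comm q 1 i]
    rfl

theorem passes_rc_d_t {n : ℕ} (hn : 5 ≤ n) :
    passes rc (n - 1) (replicate (n - 3) Ctl.blank ++ [.d, .t, .blank]) =
      some (replicate (n - 4) Ctl.blank ++ [.d, .blank, .t, .blank]) := by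
  obtain ⟨m, rfl⟩ : ∃ m, n = m + 5 := ⟨n - 5, by omega⟩
  simp only [Nat.reduceSubDiff]
  rw [passes, pass_rc_d_t, Option.bind_some, passes, pass_rc_g_w, Option.bind_some,
    passes, pass_rc_z_w, Option.bind_some, passes_rc_pulseWord, zero_add]

theorem ofFn_eq_replicate_d_t {n : ℕ} (hn : 3 ≤ n) :
    (List.ofFn fun i : Fin n =>
      if i.val = n - 3 then Ctl.d else if i.val = n - 2 then Ctl.t else Ctl.blank) =
      replicate (n - 3) Ctl.blank ++ [.d, .t, .blank] := by
  obtain ⟨m, rfl⟩ : ∃ m, n = m + 3 := ⟨n - 3, by omega⟩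
  simp only [Nat.add_sub_cancel, Nat.reduceSubDiff]
  refine List.ext_getElem (by simp) fun i h _ => ?_
  rw [List.length_ofFn] at h
  rw [List.getElem_ofFn]
  rcases (by omega : i < m ∨ i = m ∨ i = m + 1 ∨ i = m + 2) with hi | rfl | rfl | rfl
  · simp [hi, hi.ne, show i ≠ m + 1 by omega]
  all_goals simp

theorem ofFn_eq_replicate_d_blank_t {n : ℕ} (hn : 4 ≤ n) :
    (List.ofFn fun i : Fin n =>
      if i.val = n - 4 then Ctl.d else if i.val = n - 2 then Ctl.t else Ctl.blank) =
      replicate (n - 4) Ctl.blank ++ [.d, .blank, .t, .blank] := by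
  obtain ⟨m, rfl⟩ : ∃ m, n = m + 4 := ⟨n - 4, by omega⟩
  simp only [Nat.add_sub_cancel, Nat.reduceSubDiff]
  refine List.ext_getElem (by simp) fun i h _ => ?_
  rw [List.length_ofFn] at h
  rw [List.getElem_ofFn]
  rcases (by omega : i < m ∨ i = m ∨ i = m + 1 ∨ i = m + 2 ∨ i = m + 3) with
    hi | rfl | rfl | rfl | rfl
  · simp [hi, hi.ne, show i ≠ m + 2 by omega]
  all_goals simp

end RRight

end Stmt8

open Stmt8 in
/-- Starting from `(s₁,blank)...(s_{n-3},blank)(s_{n-2},d)(s_{n-1},t)(sₙ,blank)`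
with `n ≥ 5`, after `n(n−1)` additional iterations the memory string is
`(s₁,blank)...(s_{n-4},blank)(s_{n-3},d)(s_{n-2},blank)(s_{n-1},t)(sₙ,blank)`:
one full cycle shifts the pulsed-hold token `d` exactly one position
counterclockwise while `t` stays fixed. -/
theorem stmt8 {α : Type*} (n : ℕ) (hn : 5 ≤ n) (s : Fin n → α) :
    iterL rc (n * (n - 1))
      (List.ofFn fun i : Fin n =>
        (s i, if i.val = n - 3 then Ctl.d
              else if i.val = n - 2 then Ctl.t else Ctl.blank)) =
    some (List.ofFn fun i : Fin n =>
      (s i, if i.val = n - 4 then Ctl.d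
            else if i.val = n - 2 then Ctl.t else Ctl.blank)) := by
  rw [List.ofFn_prod_eq_zip, List.ofFn_prod_eq_zip, ofFn_eq_replicate_d_t (by omega),
    ofFn_eq_replicate_d_blank_t (by omega)]
  have hlen : (List.replicate (n - 3) Ctl.blank ++ [Ctl.d, Ctl.t, Ctl.blank]).length = n := by
    simp; omega
  have hcycle := iterL_mul_length_zip_of_passes_eq_some (xs := List.ofFn s) (passes_rc_d_t hn)
    (by rw [hlen, List.length_ofFn])
  rwa [hlen, Nat.mul_comm] at hcycle
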